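/- arXiv:1308.0417 — 4 statements merged into one kernel-verified Lean document; each statement's English description precedes it below -/
import Mathlib

section
/- Let I = [α, β] ⊂ ℝ be a compact interval and let B be a stochastic process on I such that there exist positive constants K₁, K₂ and τ ∈ [0,4) with P(sup_{|x−y| ≤ u} |B(x) − B(y)| > v) ≤ K₁ exp(−K₂ v² u^{−τ}) for all x ∈ I, u ∈ (0,1], v > 0 (supremum over y ∈ I with |x−y| ≤ u). Then there exist positive constants K₁', K₂' such that for all u ∈ (0, 1/2] and v > 0, P(sup_{x ∈ I} sup_{|x−y| ≤ u} |B(x) − B(y)| > v) ≤ K₁' u^{−1} exp(−K₂' v² u^{−τ}). -/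
open MeasureTheory Set

theorem stmt0 {Ω : Type*} [MeasurableSpace Ω] (μ : Measure Ω) [IsProbabilityMeasure μ]
    (α β : ℝ) (hαβ : α ≤ β) (B : Ω → ℝ → ℝ) (K₁ K₂ τ : ℝ)
    (hK₁ : 0 < K₁) (hK₂ : 0 < K₂) (hτ₀ : 0 ≤ τ) (hτ₄ : τ < 4)
    (hB : ∀ x ∈ Icc α β, ∀ u : ℝ, u ∈ Ioc (0:ℝ) 1 → ∀ v : ℝ, 0 < v →
      μ {ω | ∃ y ∈ Icc α β, |x - y| ≤ u ∧ v < |B ω x - B ω y|}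
        ≤ ENNReal.ofReal (K₁ * Real.exp (-K₂ * v ^ 2 * u ^ (-τ)))) :
    ∃ K₁' > (0:ℝ), ∃ K₂' > (0:ℝ), ∀ u : ℝ, u ∈ Ioc (0:ℝ) (1/2) → ∀ v : ℝ, 0 < v →
      μ {ω | ∃ x ∈ Icc α β, ∃ y ∈ Icc α β, |x - y| ≤ u ∧ v < |B ω x - B ω y|}
        ≤ ENNReal.ofReal (K₁' * u⁻¹ * Real.exp (-K₂' * v ^ 2 * u ^ (-τ))) := by
  have hba : (0:ℝ) ≤ β - α := by linarith
  have h2τ : (0:ℝ) < (2:ℝ) ^ (-τ) := Real.rpow_pos_of_pos two_pos _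
  refine ⟨K₁ * (β - α + 1), by positivity, K₂ * 2 ^ (-τ) / 4, by positivity, ?_⟩
  intro u hu v hv
  obtain ⟨hu0, hu2⟩ := hu
  set N : ℕ := ⌊(β - α) / u⌋₊ with hN
  set g : ℕ → ℝ := fun i => α + i * u with hg
  set S : ℕ → Set Ω :=
    fun i => {ω | ∃ y ∈ Icc α β, |g i - y| ≤ 2 * u ∧ v / 2 < |B ω (g i) - B ω y|} with hS
  have h2u : 2 * u ∈ Ioc (0:ℝ) 1 := ⟨by linarith, by linarith⟩
  have hNle : (N : ℝ) ≤ (β - α) / u := Nat.floor_le (by positivity)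
  have hgmem : ∀ i ≤ N, g i ∈ Icc α β := by
    intro i hi
    constructor
    · simp only [hg]; nlinarith [Nat.cast_nonneg (α := ℝ) i]
    · simp only [hg]
      have hiN : (i : ℝ) ≤ (N : ℝ) := Nat.cast_le.2 hi
      have : (i : ℝ) * u ≤ (β - α) / u * u := by
        apply mul_le_mul_of_nonneg_right (le_trans hiN hNle) hu0.le
      rw [div_mul_cancel₀ _ hu0.ne'] at this
      linarith
  have hcover : {ω | ∃ x ∈ Icc α β, ∃ y ∈ Icc α β, |x - y| ≤ u ∧ v < |B ω x - B ω y|}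
      ⊆ ⋃ i ∈ Finset.range (N + 1), S i := by
    rintro ω ⟨x, hx, y, hy, hxy, hv'⟩
    set i : ℕ := ⌊(x - α) / u⌋₊ with hi
    have hxα : 0 ≤ x - α := by linarith [hx.1]
    have hiN : i ≤ N := Nat.floor_le_floor (by gcongr; linarith [hx.2])
    have hgi_le : g i ≤ x := by
      have h1 : (i : ℝ) ≤ (x - α) / u := Nat.floor_le (by positivity)
      have : (i : ℝ) * u ≤ (x - α) / u * u := mul_le_mul_of_nonneg_right h1 hu0.le
      rw [div_mul_cancel₀ _ hu0.ne'] at this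
      simp only [hg]; linarith
    have hx_lt : x < g i + u := by
      have h1 : (x - α) / u < (i : ℝ) + 1 := Nat.lt_floor_add_one _
      have : (x - α) / u * u < ((i : ℝ) + 1) * u := by
        exact mul_lt_mul_of_pos_right h1 hu0
      rw [div_mul_cancel₀ _ hu0.ne'] at this
      simp only [hg]; linarith
    have hgx : |g i - x| ≤ u := by rw [abs_le]; constructor <;> linarith
    have hgy : |g i - y| ≤ 2 * u := by
      calc |g i - y| = |(g i - x) + (x - y)| := by ring_nf
        _ ≤ |g i - x| + |x - y| := abs_add_le _ _
        _ ≤ 2 * u := by linarith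
    have htri : |B ω x - B ω y| ≤ |B ω (g i) - B ω x| + |B ω (g i) - B ω y| := by
      calc |B ω x - B ω y| = |-(B ω (g i) - B ω x) + (B ω (g i) - B ω y)| := by ring_nf
        _ ≤ |-(B ω (g i) - B ω x)| + |B ω (g i) - B ω y| := abs_add_le _ _
        _ = _ := by rw [abs_neg]
    have hmem : ω ∈ S i := by
      by_cases hc : v / 2 < |B ω (g i) - B ω x|
      · exact ⟨x, hx, le_trans hgx (by linarith), hc⟩
      · refine ⟨y, hy, hgy, ?_⟩
        push_neg at hc
        linarith
    exact Set.mem_biUnion (Finset.mem_range.2 (Nat.lt_succ_of_le hiN)) hmem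
  have hexp : -K₂ * (v / 2) ^ 2 * (2 * u) ^ (-τ)
      = -(K₂ * 2 ^ (-τ) / 4) * v ^ 2 * u ^ (-τ) := by
    rw [Real.mul_rpow two_pos.le hu0.le]
    ring
  have hbound : ∀ i ∈ Finset.range (N + 1),
      μ (S i) ≤ ENNReal.ofReal (K₁ * Real.exp (-(K₂ * 2 ^ (-τ) / 4) * v ^ 2 * u ^ (-τ))) := by
    intro i hi
    have := hB (g i) (hgmem i (Nat.lt_succ_iff.1 (Finset.mem_range.1 hi)))
      (2 * u) h2u (v / 2) (half_pos hv)
    rwa [hexp] at this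
  set c : ℝ := K₁ * Real.exp (-(K₂ * 2 ^ (-τ) / 4) * v ^ 2 * u ^ (-τ)) with hc
  have hc0 : 0 ≤ c := by positivity
  calc μ {ω | ∃ x ∈ Icc α β, ∃ y ∈ Icc α β, |x - y| ≤ u ∧ v < |B ω x - B ω y|}
      ≤ μ (⋃ i ∈ Finset.range (N + 1), S i) := measure_mono hcover
    _ ≤ ∑ i ∈ Finset.range (N + 1), μ (S i) := measure_biUnion_finset_le _ _
    _ ≤ ∑ _i ∈ Finset.range (N + 1), ENNReal.ofReal c := Finset.sum_le_sum hbound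
    _ = ((N + 1 : ℕ) : ENNReal) * ENNReal.ofReal c := by
        rw [Finset.sum_const, Finset.card_range, nsmul_eq_mul]
    _ = ENNReal.ofReal (((N + 1 : ℕ) : ℝ) * c) := by
        rw [← ENNReal.ofReal_natCast, ← ENNReal.ofReal_mul (Nat.cast_nonneg _)]
    _ ≤ ENNReal.ofReal (K₁ * (β - α + 1) * u⁻¹ *
          Real.exp (-(K₂ * 2 ^ (-τ) / 4) * v ^ 2 * u ^ (-τ))) := by
        apply ENNReal.ofReal_le_ofReal
        have hN1 : ((N + 1 : ℕ) : ℝ) ≤ (β - α + 1) * u⁻¹ := by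
          push_cast
          have h1u : (1:ℝ) ≤ u⁻¹ := by
            have h := mul_inv_cancel₀ hu0.ne'
            have hp : 0 < u⁻¹ := inv_pos.2 hu0
            nlinarith
          have : (β - α) / u = (β - α) * u⁻¹ := div_eq_mul_inv _ _
          nlinarith
        calc ((N + 1 : ℕ) : ℝ) * c ≤ ((β - α + 1) * u⁻¹) * c := by
              apply mul_le_mul_of_nonneg_right hN1 hc0
          _ = K₁ * (β - α + 1) * u⁻¹ *
                Real.exp (-(K₂ * 2 ^ (-τ) / 4) * v ^ 2 * u ^ (-τ)) := by
              rw [hc]; ring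
end

section
/- Let g, h : [a,b] → ℝ be bounded functions, and let ĝ and ĥ denote their least concave majorants on [a,b]. Then sup_{x ∈ [a,b]} |ĝ(x) − ĥ(x)| ≤ sup_{x ∈ [a,b]} |g(x) − h(x)|. -/
open Set

/-- The least concave majorant of `g` on `[a,b]`: pointwise infimum of all
concave functions on `[a,b]` dominating `g` there. -/
noncomputable def leastConcaveMajorant (a b : ℝ) (g : ℝ → ℝ) : ℝ → ℝ :=
  fun x => sInf {y : ℝ | ∃ φ : ℝ → ℝ, ConcaveOn ℝ (Icc a b) φ ∧
    (∀ t ∈ Icc a b, g t ≤ φ t) ∧ y = φ x}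

lemma lcm_key (a b : ℝ) (g h : ℝ → ℝ) (M : ℝ)
    (Cg Ch : ℝ) (hCg : ∀ x ∈ Icc a b, |g x| ≤ Cg) (hCh : ∀ x ∈ Icc a b, |h x| ≤ Ch)
    (hM : ∀ t ∈ Icc a b, g t - h t ≤ M) :
    ∀ x ∈ Icc a b, leastConcaveMajorant a b g x ≤ leastConcaveMajorant a b h x + M := by
  intro x hx
  have hbddg : BddBelow {y : ℝ | ∃ φ : ℝ → ℝ, ConcaveOn ℝ (Icc a b) φ ∧
      (∀ t ∈ Icc a b, g t ≤ φ t) ∧ y = φ x} := by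
    refine ⟨-Cg, ?_⟩
    rintro y ⟨φ, hc, hd, rfl⟩
    have := hd x hx
    have := (abs_le.mp (hCg x hx)).1
    linarith
  have hneh : Set.Nonempty {y : ℝ | ∃ φ : ℝ → ℝ, ConcaveOn ℝ (Icc a b) φ ∧
      (∀ t ∈ Icc a b, h t ≤ φ t) ∧ y = φ x} := by
    refine ⟨Ch, fun _ => Ch, concaveOn_const _ (convex_Icc a b),
      fun t ht => (abs_le.mp (hCh t ht)).2, rfl⟩
  rw [← sub_le_iff_le_add]
  refine le_csInf hneh ?_
  rintro y ⟨φ, hc, hd, rfl⟩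
  rw [sub_le_iff_le_add]
  refine csInf_le hbddg ⟨fun t => φ t + M, hc.add (concaveOn_const _ (convex_Icc a b)),
    fun t ht => ?_, rfl⟩
  show g t ≤ φ t + M
  have := hd t ht
  have := hM t ht
  linarith

theorem stmt1 (a b : ℝ) (hab : a ≤ b) (g h : ℝ → ℝ)
    (hg : ∃ C : ℝ, ∀ x ∈ Icc a b, |g x| ≤ C)
    (hh : ∃ C : ℝ, ∀ x ∈ Icc a b, |h x| ≤ C) :
    (⨆ x : Icc a b, |leastConcaveMajorant a b g x - leastConcaveMajorant a b h x|)
      ≤ ⨆ x : Icc a b, |g x - h x| := by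
  obtain ⟨Cg, hCg⟩ := hg
  obtain ⟨Ch, hCh⟩ := hh
  have hne : (Icc a b).Nonempty := nonempty_Icc.mpr hab
  haveI := hne.to_subtype
  set M := ⨆ x : Icc a b, |g x - h x| with hMdef
  have hbdd : BddAbove (range fun x : Icc a b => |g ↑x - h ↑x|) := by
    refine ⟨Cg + Ch, ?_⟩
    rintro y ⟨x, rfl⟩
    calc |g ↑x - h ↑x| ≤ |g ↑x| + |h ↑x| := abs_sub _ _
      _ ≤ Cg + Ch := add_le_add (hCg x x.2) (hCh x x.2)
  have hdiff : ∀ x ∈ Icc a b, |g x - h x| ≤ M := fun x hx => le_ciSup hbdd ⟨x, hx⟩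
  have h1 : ∀ x ∈ Icc a b, leastConcaveMajorant a b g x ≤ leastConcaveMajorant a b h x + M :=
    lcm_key a b g h M Cg Ch hCg hCh (fun t ht => (abs_sub_le_iff.mp (hdiff t ht)).1)
  have h2 : ∀ x ∈ Icc a b, leastConcaveMajorant a b h x ≤ leastConcaveMajorant a b g x + M :=
    lcm_key a b h g M Ch Cg hCh hCg (fun t ht => (abs_sub_le_iff.mp (hdiff t ht)).2)
  refine ciSup_le fun x => ?_
  rw [abs_sub_le_iff]
  constructor
  · linarith [h1 x x.2]
  · linarith [h2 x x.2]
end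

section
/- Let W be a standard Brownian motion. For every u ∈ (0,1], v > 0 and x ≥ u, P( sup_{z ≥ u, z ≤ x} { W(x − z) − W(x) − v z² } > 0 ) ≤ exp(−v² u³ / 8). -/
open MeasureTheory ProbabilityTheory Set

/-- A standard Brownian motion on `[0,∞)` (extended to `ℝ`). -/
def IsStdBrownianMotion {Ω : Type*} [MeasurableSpace Ω] (μ : Measure Ω)
    (W : Ω → ℝ → ℝ) : Prop :=
  IsProbabilityMeasure μ ∧
  (∀ t : ℝ, Measurable fun ω => W ω t) ∧
  (∀ᵐ ω ∂μ, W ω 0 = 0) ∧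
  (∀ᵐ ω ∂μ, Continuous (W ω)) ∧
  (∀ s t : ℝ, 0 ≤ s → s ≤ t →
    Measure.map (fun ω => W ω t - W ω s) μ = gaussianReal 0 (Real.toNNReal (t - s))) ∧
  (∀ (n : ℕ) (t : ℕ → ℝ), Monotone t → (∀ i, 0 ≤ t i) →
    iIndepFun
      (fun i : Fin n => fun ω => W ω (t (i + 1)) - W ω (t i)) μ)


/-!
Below the parabola `v z²` on `[u, ∞)` lies the line `a + b z` with `a = v u² / 2`, `b = v u / 2`,
and `2 a b = v² u³ / 2`. Seen from `x` backwards, `z ↦ W (x - z) - W x` is again a Brownian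
motion, so along any finite grid `0 = z₀ ≤ … ≤ zₙ ≤ x` it is a Gaussian random walk `S` with
variances `zᵢ₊₁ - zᵢ`. For such a walk `exp (2 b Sᵢ - 2 b² zᵢ)` is a martingale of mean one which
exceeds `exp (2 a b)` whenever `S` crosses the line, so Doob's maximal inequality bounds the
crossing probability by `exp (-2 a b)`. By continuity of the paths, the dyadic grids of `[0, x]`
exhaust the event of the theorem.
-/

open Real Filter Topology
open scoped NNReal ENNReal

theorem exists_dyadic_mem_of_isOpen {U : Set ℝ} (hU : IsOpen U) {x z : ℝ} (hx : 0 < x)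
    (hz : z ∈ U) (hz0 : 0 ≤ z) (hzx : z ≤ x) : ∃ m j : ℕ, j ≤ 2 ^ m ∧ x * j / 2 ^ m ∈ U := by
  have hlim : Tendsto (fun m : ℕ => x * (⌊z / x * 2 ^ m⌋₊ / 2 ^ m)) atTop (𝓝 (x * (z / x))) :=
    ((tendsto_nat_floor_mul_div_atTop (div_nonneg hz0 hx.le)).comp
      (tendsto_pow_atTop_atTop_of_one_lt one_lt_two)).const_mul x
  rw [mul_div_cancel₀ z hx.ne'] at hlim
  obtain ⟨m, hm⟩ := (hlim.eventually (hU.mem_nhds hz)).exists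
  refine ⟨m, ⌊z / x * 2 ^ m⌋₊, Nat.floor_le_of_le ?_, by rwa [mul_div_assoc]⟩
  calc z / x * 2 ^ m ≤ 1 * 2 ^ m := by gcongr; exact (div_le_one hx).2 hzx
    _ = ((2 ^ m : ℕ) : ℝ) := by push_cast; ring

section BarrierCrossing

variable {Ω : Type*} {mΩ : MeasurableSpace Ω} {μ : Measure Ω}

theorem lintegral_ofReal_exp_mul_sub_of_map_eq_gaussianReal {Y : Ω → ℝ} (hY : Measurable Y)
    {v : ℝ≥0} (hYlaw : μ.map Y = gaussianReal 0 v) (c : ℝ) :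
    ∫⁻ ω, ENNReal.ofReal (exp (c * Y ω - c ^ 2 * v / 2)) ∂μ = 1 := by
  rw [← lintegral_map (f := fun y => ENNReal.ofReal (exp (c * y - c ^ 2 * v / 2))) (by fun_prop)
    hY, hYlaw]
  simp_rw [sub_eq_add_neg (c * _), exp_add, ENNReal.ofReal_mul (exp_pos _).le]
  rw [lintegral_mul_const' _ _ ENNReal.ofReal_ne_top,
    ← ofReal_integral_eq_lintegral_ofReal (integrable_exp_mul_gaussianReal c)
      (ae_of_all _ fun _ => (exp_pos _).le)]
  have hmgf := congrFun (mgf_id_gaussianReal (μ := 0) (v := v)) c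
  simp only [mgf, id, zero_mul, zero_add] at hmgf
  rw [hmgf, ← ENNReal.ofReal_mul (exp_pos _).le, ← exp_add]
  ring_nf
  simp

theorem indicator_add_indicator_compl_le {U V : Set Ω} (hUV : U ⊆ V) {c : ℝ≥0∞}
    {g : Ω → ℝ≥0∞} (hg : ∀ ω ∈ V \ U, c ≤ g ω) :
    V.indicator (fun _ => c) + Vᶜ.indicator g ≤ U.indicator (fun _ => c) + Uᶜ.indicator g := by
  intro ω
  by_cases hU : ω ∈ U
  · simp [hU, hUV hU]
  · by_cases hV : ω ∈ V
    · simpa [hU, hV] using hg ω ⟨hV, hU⟩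
    · simp [hU, hV]

theorem lintegral_indicator_const_add_indicator_compl {U : Set Ω} (hU : MeasurableSet U)
    (c : ℝ≥0∞) (g : Ω → ℝ≥0∞) :
    ∫⁻ ω, (U.indicator (fun _ => c) + Uᶜ.indicator g) ω ∂μ = c * μ U + ∫⁻ ω in Uᶜ, g ω ∂μ := by
  simp only [Pi.add_apply]
  rw [lintegral_add_left' (measurable_const.indicator hU).aemeasurable,
    lintegral_indicator_const hU, lintegral_indicator hU.compl]

theorem measurableSet_exists_le_le {ℱ : Filtration ℕ mΩ} {G : ℕ → Ω → ℝ≥0∞}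
    (hG : ∀ i, Measurable[ℱ i] (G i)) (c : ℝ≥0∞) (i : ℕ) :
    MeasurableSet[ℱ i] {ω | ∃ j ≤ i, c ≤ G j ω} := by
  have h : {ω | ∃ j ≤ i, c ≤ G j ω} = ⋃ j, ⋃ (_ : j ≤ i), {ω | c ≤ G j ω} := by ext; simp
  rw [h]
  exact MeasurableSet.iUnion fun j => MeasurableSet.iUnion fun hj =>
    ℱ.mono hj _ (measurableSet_le measurable_const (hG j))

/-- Doob's maximal inequality, for a nonnegative supermartingale given through set integrals. -/
theorem mul_measure_exists_le_le_lintegral_zero {ℱ : Filtration ℕ mΩ} {G : ℕ → Ω → ℝ≥0∞}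
    (hG : ∀ i, Measurable[ℱ i] (G i)) {n : ℕ}
    (hsuper : ∀ i < n, ∀ A, MeasurableSet[ℱ i] A →
      ∫⁻ ω in A, G (i + 1) ω ∂μ ≤ ∫⁻ ω in A, G i ω ∂μ) (c : ℝ≥0∞) :
    c * μ {ω | ∃ i ≤ n, c ≤ G i ω} ≤ ∫⁻ ω, G 0 ω ∂μ := by
  set U : ℕ → Set Ω := fun i => {ω | ∃ j ≤ i, c ≤ G j ω}
  have hU : ∀ i, MeasurableSet[ℱ i] (U i) := measurableSet_exists_le_le hG c
  -- `G` stopped when it first reaches `c`, and lowered to `c` there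
  set Q : ℕ → Ω → ℝ≥0∞ := fun i => (U i).indicator (fun _ => c) + (U i)ᶜ.indicator (G i)
  have hQ : ∀ i ≤ n, ∫⁻ ω, Q i ω ∂μ ≤ ∫⁻ ω, G 0 ω ∂μ := by
    intro i
    induction i with
    | zero =>
      refine fun _ => lintegral_mono fun ω => ?_
      by_cases hω : ω ∈ U 0
      · obtain ⟨j, hj, hcj⟩ := hω
        obtain rfl := Nat.le_zero.1 hj
        simp [Q, U, hcj]
      · simp [Q, hω]
    | succ i ih =>
      intro hi
      have hUi := ℱ.le i _ (hU i)
      calc ∫⁻ ω, Q (i + 1) ω ∂μ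
          ≤ ∫⁻ ω, ((U i).indicator (fun _ => c) + (U i)ᶜ.indicator (G (i + 1))) ω ∂μ := by
            refine lintegral_mono (indicator_add_indicator_compl_le ?_ ?_)
            · exact fun ω ⟨j, hj, hcj⟩ => ⟨j, hj.trans i.le_succ, hcj⟩
            · rintro ω ⟨⟨j, hj, hcj⟩, hωi⟩
              rcases Nat.le_succ_iff.1 hj with hj | rfl
              · exact absurd ⟨j, hj, hcj⟩ hωi
              · exact hcj
        _ ≤ ∫⁻ ω, Q i ω ∂μ := by
            simp only [Q, lintegral_indicator_const_add_indicator_compl hUi]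
            exact add_le_add le_rfl (hsuper i hi _ (hU i).compl)
        _ ≤ ∫⁻ ω, G 0 ω ∂μ := ih (by omega)
  calc c * μ (U n) = ∫⁻ ω, (U n).indicator (fun _ => c) ω ∂μ :=
        (lintegral_indicator_const (ℱ.le n _ (hU n)) c).symm
    _ ≤ ∫⁻ ω, Q n ω ∂μ := lintegral_mono fun ω => le_add_right le_rfl
    _ ≤ ∫⁻ ω, G 0 ω ∂μ := hQ n le_rfl

theorem measurable_iSup_comap_increment {S : ℕ → Ω → ℝ} (hS0 : ∀ ω, S 0 ω = 0) {n i j : ℕ}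
    (hji : j ≤ i) (hin : i ≤ n) :
    Measurable[⨆ (k : Fin n) (_ : (k : ℕ) < i),
      MeasurableSpace.comap (fun ω => S (k + 1) ω - S k ω) inferInstance] (S j) := by
  induction j with
  | zero => exact (funext hS0 : S 0 = fun _ => 0) ▸ measurable_const
  | succ j ih =>
    have hincr : Measurable[⨆ (k : Fin n) (_ : (k : ℕ) < i),
        MeasurableSpace.comap (fun ω => S (k + 1) ω - S k ω) inferInstance]
        (fun ω => S (j + 1) ω - S j ω) :=
      (comap_measurable _).mono (le_iSup₂_of_le (⟨j, by omega⟩ : Fin n) hji le_rfl) le_rfl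
    convert (ih (by omega)).add hincr using 1
    funext ω
    simp

theorem indep_natural_increment {S : ℕ → Ω → ℝ} (hS : ∀ i, Measurable (S i))
    (hS0 : ∀ ω, S 0 ω = 0) {n : ℕ}
    (hindep : iIndepFun (fun (k : Fin n) ω => S (k + 1) ω - S k ω) μ) {i : ℕ} (hi : i < n) :
    Indep (Filtration.natural S (fun j => (hS j).stronglyMeasurable) i)
      (MeasurableSpace.comap (fun ω => S (i + 1) ω - S i ω) inferInstance) μ := by
  have h := indep_iSup_of_disjoint (fun k => ((hS _).sub (hS _)).comap_le) hindep.iIndep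
    (S := {k : Fin n | (k : ℕ) < i}) (T := {⟨i, hi⟩})
    (Set.disjoint_singleton_right.2 (lt_irrefl i))
  simp only [Set.mem_singleton_iff, iSup_iSup_eq_left] at h
  refine indep_of_indep_of_le_left h (iSup₂_le fun j hj => ?_)
  exact (measurable_iSup_comap_increment hS0 hj hi.le).comap_le

noncomputable def expMartingale (c : ℝ) (S : ℕ → Ω → ℝ) (s : ℕ → ℝ) (i : ℕ) (ω : Ω) : ℝ≥0∞ :=
  ENNReal.ofReal (exp (c * S i ω - c ^ 2 * s i / 2))

theorem expMartingale_succ (c : ℝ) (S : ℕ → Ω → ℝ) (s : ℕ → ℝ) (i : ℕ) (ω : Ω) :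
    expMartingale c S s (i + 1) ω = expMartingale c S s i ω *
      ENNReal.ofReal (exp (c * (S (i + 1) ω - S i ω) - c ^ 2 * (s (i + 1) - s i) / 2)) := by
  rw [expMartingale, expMartingale, ← ENNReal.ofReal_mul (exp_pos _).le, ← exp_add]
  ring_nf

theorem measurable_natural_expMartingale {S : ℕ → Ω → ℝ} (hS : ∀ i, Measurable (S i)) (c : ℝ)
    (s : ℕ → ℝ) (i : ℕ) :
    Measurable[Filtration.natural S (fun j => (hS j).stronglyMeasurable) i]
      (expMartingale c S s i) :=
  have hSi := (Filtration.stronglyAdapted_natural (fun j => (hS j).stronglyMeasurable) i).measurable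
  ((hSi.const_mul c).sub_const _).exp.ennreal_ofReal

theorem setLIntegral_expMartingale_succ {S : ℕ → Ω → ℝ} (hS : ∀ i, Measurable (S i))
    (hS0 : ∀ ω, S 0 ω = 0) {s : ℕ → ℝ} (hs : Monotone s) {n : ℕ}
    (hindep : iIndepFun (fun (k : Fin n) ω => S (k + 1) ω - S k ω) μ)
    (hlaw : ∀ k < n,
      μ.map (fun ω => S (k + 1) ω - S k ω) = gaussianReal 0 (s (k + 1) - s k).toNNReal)
    (c : ℝ) {i : ℕ} (hi : i < n) {A : Set Ω}
    (hA : MeasurableSet[Filtration.natural S (fun j => (hS j).stronglyMeasurable) i] A) :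
    ∫⁻ ω in A, expMartingale c S s (i + 1) ω ∂μ = ∫⁻ ω in A, expMartingale c S s i ω ∂μ := by
  set ℱ := Filtration.natural S (fun j => (hS j).stronglyMeasurable)
  set R : Ω → ℝ≥0∞ := fun ω =>
    ENNReal.ofReal (exp (c * (S (i + 1) ω - S i ω) - c ^ 2 * (s (i + 1) - s i) / 2))
  have hR : ∫⁻ ω, R ω ∂μ = 1 := by
    have hvar : ((s (i + 1) - s i).toNNReal : ℝ) = s (i + 1) - s i :=
      Real.coe_toNNReal _ (sub_nonneg.2 (hs i.le_succ))
    simpa only [hvar] using lintegral_ofReal_exp_mul_sub_of_map_eq_gaussianReal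
      (Y := fun ω => S (i + 1) ω - S i ω) ((hS _).sub (hS _)) (hlaw i hi) c
  have hRmeas :
      Measurable[MeasurableSpace.comap (fun ω => S (i + 1) ω - S i ω) inferInstance] R :=
    (((comap_measurable _).const_mul c).sub_const _).exp.ennreal_ofReal
  calc ∫⁻ ω in A, expMartingale c S s (i + 1) ω ∂μ
      = ∫⁻ ω, A.indicator (expMartingale c S s i) ω * R ω ∂μ := by
        rw [← lintegral_indicator (ℱ.le i _ hA), funext (expMartingale_succ c S s i)]
        simp only [Set.indicator_mul_left, R]
    _ = ∫⁻ ω in A, expMartingale c S s i ω ∂μ := by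
        rw [lintegral_mul_eq_lintegral_mul_lintegral_of_independent_measurableSpace (ℱ.le i)
          ((hS _).sub (hS _)).comap_le (indep_natural_increment hS hS0 hindep hi)
          ((measurable_natural_expMartingale hS c s i).indicator hA) hRmeas, hR,
          mul_one, lintegral_indicator (ℱ.le i _ hA)]

theorem measure_exists_lt_le_exp_of_gaussian_increments [IsProbabilityMeasure μ]
    {S : ℕ → Ω → ℝ} (hS : ∀ i, Measurable (S i)) (hS0 : ∀ ω, S 0 ω = 0)
    {s : ℕ → ℝ} (hs0 : s 0 = 0) (hs : Monotone s) {n : ℕ}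
    (hindep : iIndepFun (fun (k : Fin n) ω => S (k + 1) ω - S k ω) μ)
    (hlaw : ∀ k < n,
      μ.map (fun ω => S (k + 1) ω - S k ω) = gaussianReal 0 (s (k + 1) - s k).toNNReal)
    (a : ℝ) {b : ℝ} (hb : 0 ≤ b) :
    μ {ω | ∃ i ≤ n, a + b * s i < S i ω} ≤ ENNReal.ofReal (exp (-(2 * a * b))) := by
  set c := ENNReal.ofReal (exp (2 * a * b))
  have hcross : {ω | ∃ i ≤ n, a + b * s i < S i ω} ⊆
      {ω | ∃ i ≤ n, c ≤ expMartingale (2 * b) S s i ω} := by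
    rintro ω ⟨i, hi, hω⟩
    refine ⟨i, hi, ENNReal.ofReal_le_ofReal (exp_le_exp.2 ?_)⟩
    nlinarith [mul_le_mul_of_nonneg_left hω.le hb]
  have hdoob := mul_measure_exists_le_le_lintegral_zero (μ := μ) (c := c)
    (measurable_natural_expMartingale hS (2 * b) s)
    fun i hi A hA => (setLIntegral_expMartingale_succ hS hS0 hs hindep hlaw _ hi hA).le
  have hG0 : ∫⁻ ω, expMartingale (2 * b) S s 0 ω ∂μ = 1 := by
    simp [expMartingale, hS0, hs0]
  rw [hG0] at hdoob
  calc μ {ω | ∃ i ≤ n, a + b * s i < S i ω} ≤ c⁻¹ :=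
        ENNReal.le_inv_iff_mul_le.2 ((mul_comm _ _).trans_le
          ((mul_le_mul_right (measure_mono hcross) c).trans hdoob))
    _ = ENNReal.ofReal (exp (-(2 * a * b))) := by
        rw [exp_neg, ENNReal.ofReal_inv_of_pos (exp_pos _)]

theorem IsStdBrownianMotion.measure_exists_lt_sub_le {W : Ω → ℝ → ℝ}
    (hW : IsStdBrownianMotion μ W) {x : ℝ} {z : ℕ → ℝ} (hz : Monotone z) (hz0 : z 0 = 0)
    {n : ℕ} (hzn : z n ≤ x) (a : ℝ) {b : ℝ} (hb : 0 ≤ b) :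
    μ {ω | ∃ i ≤ n, a + b * z i < W ω (x - z i) - W ω x} ≤
      ENNReal.ofReal (exp (-(2 * a * b))) := by
  obtain ⟨hprob, hmeas, -, -, hlaw, hindep⟩ := hW
  have hincr : ∀ k : ℕ, (fun ω => (W ω (x - z (k + 1)) - W ω x) - (W ω (x - z k) - W ω x)) =
      Neg.neg ∘ fun ω => W ω (x - z k) - W ω (x - z (k + 1)) := by
    intro k; funext ω; simp
  refine measure_exists_lt_le_exp_of_gaussian_increments
    (S := fun i ω => W ω (x - z i) - W ω x) (fun i => (hmeas _).sub (hmeas _))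
    (fun ω => by simp [hz0]) hz0 hz ?_ ?_ a hb
  · -- the increments of `S` are those of `W` along the times `x - z (n - j)`, reversed and negated
    set t : ℕ → ℝ := fun j => x - z (n - j)
    have h := ((hindep n t (fun j j' hjj' => sub_le_sub_left (hz (Nat.sub_le_sub_left hjj' n)) x)
      (fun j => sub_nonneg.2 ((hz (Nat.sub_le n j)).trans hzn))).precomp
        Fin.rev_injective).comp (fun _ => Neg.neg) (fun _ => measurable_neg)
    convert h using 2 with k
    have hrev : n - (k.rev + 1) = k ∧ n - k.rev = k + 1 := by
      simp only [Fin.val_rev]; omega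
    simp only [hincr, t, hrev]
  · intro k hk
    have hWk : Measurable fun ω => W ω (x - z k) - W ω (x - z (k + 1)) :=
      (hmeas _).sub (hmeas _)
    rw [hincr, ← Measure.map_map measurable_neg hWk,
      hlaw _ _ (sub_nonneg.2 ((hz hk).trans hzn)) (by linarith [hz (Nat.le_succ k)]),
      gaussianReal_map_neg, neg_zero]
    congr 2
    ring

theorem IsStdBrownianMotion.measure_exists_dyadic_lt_sub_le {W : Ω → ℝ → ℝ}
    (hW : IsStdBrownianMotion μ W) {x : ℝ} (hx : 0 ≤ x)
    (a : ℝ) {b : ℝ} (hb : 0 ≤ b) :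
    μ {ω | ∃ m j : ℕ, j ≤ 2 ^ m ∧ a + b * (x * j / 2 ^ m) < W ω (x - x * j / 2 ^ m) - W ω x} ≤
      ENNReal.ofReal (exp (-(2 * a * b))) := by
  set E : ℕ → Set Ω := fun m => {ω | ∃ j : ℕ, j ≤ 2 ^ m ∧
    a + b * (x * j / 2 ^ m) < W ω (x - x * j / 2 ^ m) - W ω x}
  have hE_mono : Monotone E := by
    refine monotone_nat_of_le_succ fun m ω ⟨j, hj, hω⟩ => ⟨2 * j, by rw [pow_succ]; omega, ?_⟩
    convert hω using 3 <;> field_simp <;> push_cast <;> ring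
  have hE : ∀ m, μ (E m) ≤ ENNReal.ofReal (exp (-(2 * a * b))) := fun m =>
    hW.measure_exists_lt_sub_le (z := fun j : ℕ => x * j / 2 ^ m) (n := 2 ^ m)
      (fun j j' hjj' => by dsimp only; gcongr) (by simp) (by simp) a hb
  calc _ = μ (⋃ m, E m) := by congr 1; ext; simp [E]
    _ = ⨆ m, μ (E m) := hE_mono.measure_iUnion
    _ ≤ _ := iSup_le hE

end BarrierCrossing

theorem stmt7 {Ω : Type*} [MeasurableSpace Ω] (μ : Measure Ω) (W : Ω → ℝ → ℝ)
    (hW : IsStdBrownianMotion μ W) (x u v : ℝ)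
    (hu : u ∈ Ioc (0:ℝ) 1) (hv : 0 < v) (hx : u ≤ x) :
    μ {ω | ∃ z : ℝ, u ≤ z ∧ z ≤ x ∧ 0 < W ω (x - z) - W ω x - v * z ^ 2}
      ≤ ENNReal.ofReal (Real.exp (-v ^ 2 * u ^ 3 / 8)) := by
  obtain ⟨hu0, -⟩ := hu
  set a := v * u ^ 2 / 2
  set b := v * u / 2
  have hx0 : 0 < x := hu0.trans_le hx
  have hcover : ∀ᵐ ω ∂μ,
      ω ∈ {ω | ∃ z : ℝ, u ≤ z ∧ z ≤ x ∧ 0 < W ω (x - z) - W ω x - v * z ^ 2} →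
      ω ∈ {ω | ∃ m j : ℕ, j ≤ 2 ^ m ∧
        a + b * (x * j / 2 ^ m) < W ω (x - x * j / 2 ^ m) - W ω x} := by
    filter_upwards [(hW.2.2.2.1 : ∀ᵐ ω ∂μ, Continuous (W ω))] with ω hω ⟨z, huz, hzx, hpos⟩
    have hbarrier : a + b * z ≤ v * z ^ 2 := by
      simp only [a, b]
      nlinarith [mul_nonneg (mul_nonneg hv.le (sub_nonneg.2 huz)) (by linarith : 0 ≤ 2 * z + u)]
    exact exists_dyadic_mem_of_isOpen (U := {y | a + b * y < W ω (x - y) - W ω x})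
      (isOpen_lt (by fun_prop) (by fun_prop)) hx0
      (show a + b * z < W ω (x - z) - W ω x by linarith) (hu0.le.trans huz) hzx
  calc _ ≤ _ := measure_mono_ae hcover
    _ ≤ ENNReal.ofReal (exp (-(2 * a * b))) :=
        hW.measure_exists_dyadic_lt_sub_le hx0.le a (by positivity)
    _ ≤ _ := ENNReal.ofReal_le_ofReal (exp_le_exp.2 (by
        simp only [a, b]; nlinarith [mul_nonneg (sq_nonneg v) (pow_pos hu0 3).le]))
end

section
/- Let F : [a,b] → ℝ be continuously differentiable with F(a) = 0 and derivative f satisfying: f is decreasing and continuously differentiable with 0 < ε ≤ |f'(t)| ≤ M < ∞ for all t ∈ [a,b]. Let x ∈ [a,b], c > 0 small, and α_x = f(x) + c|f'(x)|. Then for all z with cz ≤ x − a and z ≥ A, where A is any constant with Aε > 2M, one has F(x − 2cz) − F(x) + 2c α_x z ≤ −ε c² z². -/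
/-!
Let `F u = ∫ a..u, f` and `y = x - 2cz`. Since `f' ≤ -ε`, `f` lies above the line
`f x + ε (x - s)` on `[y, x]`, so `F y - F x = -∫ y..x, f ≤ -2cz f(x) - 2εc²z²`. The remaining
term `2c²|f'(x)| z ≤ 2c²Mz` is absorbed by half of this quadratic gain as soon as `εz ≥ 2M`,
which `z ≥ A` guarantees.
-/

open Set intervalIntegral

theorem add_mul_sub_le_of_hasDerivAt_le_neg {f f' : ℝ → ℝ} {a b ε : ℝ}
    (hf : ∀ t ∈ Icc a b, HasDerivAt f (f' t) t) (hf' : ∀ t ∈ Icc a b, f' t ≤ -ε)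
    {s x : ℝ} (hs : s ∈ Icc a b) (hx : x ∈ Icc a b) (hsx : s ≤ x) :
    f x + ε * (x - s) ≤ f s := by
  have hcont : ContinuousOn f (Icc a b) :=
    fun t ht => (hf t ht).continuousAt.continuousWithinAt
  have hdiff : DifferentiableOn ℝ f (interior (Icc a b)) :=
    fun t ht => (hf t (interior_subset ht)).differentiableAt.differentiableWithinAt
  have hderiv_le : ∀ t ∈ interior (Icc a b), deriv f t ≤ -ε := fun t ht => by
    rw [(hf t (interior_subset ht)).deriv]
    exact hf' t (interior_subset ht)
  linarith [(convex_Icc a b).image_sub_le_mul_sub_of_deriv_le hcont hdiff hderiv_le s hs x hx hsx]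

theorem mul_sub_add_le_integral_of_le {g : ℝ → ℝ} {m ε y x : ℝ} (hyx : y ≤ x)
    (hg : IntervalIntegrable g MeasureTheory.volume y x)
    (hle : ∀ s ∈ Icc y x, m + ε * (x - s) ≤ g s) :
    m * (x - y) + ε * (x - y) ^ 2 / 2 ≤ ∫ s in y..x, g s := by
  have hline : ∫ s in y..x, (m + ε * (x - s)) = m * (x - y) + ε * (x - y) ^ 2 / 2 := by
    rw [integral_add intervalIntegrable_const (by apply Continuous.intervalIntegrable; fun_prop),
      integral_const_mul, integral_comp_sub_left (fun s => s)]
    simp only [integral_const, smul_eq_mul, sub_self, integral_id, ne_eq, OfNat.ofNat_ne_zero,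
      not_false_eq_true, zero_pow, sub_zero]
    ring
  rw [← hline]
  exact integral_mono_on hyx (by apply Continuous.intervalIntegrable; fun_prop) hg hle

theorem integral_sub_integral_add_mul_le_of_hasDerivAt_le_neg {f f' : ℝ → ℝ} {a b ε x h : ℝ}
    (hf : ∀ t ∈ Icc a b, HasDerivAt f (f' t) t) (hf' : ∀ t ∈ Icc a b, f' t ≤ -ε)
    (hxb : x ≤ b) (hh : 0 ≤ h) (hxh : a ≤ x - h) :
    (∫ s in a..(x - h), f s) - (∫ s in a..x, f s) + h * f x ≤ -(ε * h ^ 2 / 2) := by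
  have hint : ∀ u ∈ Icc a b, ∀ v ∈ Icc a b, IntervalIntegrable f MeasureTheory.volume u v :=
    fun u hu v hv => ContinuousOn.intervalIntegrable fun t ht =>
      (hf t (uIcc_subset_Icc hu hv ht)).continuousAt.continuousWithinAt
  have ha : a ∈ Icc a b := ⟨le_rfl, by linarith⟩
  have hx : x ∈ Icc a b := ⟨by linarith, hxb⟩
  have hy : x - h ∈ Icc a b := ⟨hxh, by linarith⟩
  have hsplit : (∫ s in a..(x - h), f s) - (∫ s in a..x, f s) = -∫ s in (x - h)..x, f s := by
    rw [integral_interval_sub_left (hint a ha _ hy) (hint a ha x hx), integral_symm]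
  have hline : ∀ s ∈ Icc (x - h) x, f x + ε * (x - s) ≤ f s := fun s hs =>
    add_mul_sub_le_of_hasDerivAt_le_neg hf hf' ⟨hxh.trans hs.1, hs.2.trans hxb⟩ hx hs.2
  have hgain := mul_sub_add_le_integral_of_le (by linarith) (hint _ hy x hx) hline
  rw [sub_sub_cancel] at hgain
  rw [hsplit]
  linarith

theorem stmt16_general (a b ε M A : ℝ) (f f' : ℝ → ℝ)
    (hε : 0 < ε)
    (hderiv : ∀ t ∈ Icc a b, HasDerivAt f (f' t) t)
    (hf'neg : ∀ t ∈ Icc a b, f' t < 0)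
    (hbounds : ∀ t ∈ Icc a b, ε ≤ |f' t| ∧ |f' t| ≤ M)
    (hA : 2 * M < A * ε) :
    ∃ c₀ > (0:ℝ), ∀ c : ℝ, 0 < c → c ≤ c₀ → ∀ x ∈ Icc a b, ∀ z : ℝ,
      A ≤ z → 2 * c * z ≤ x - a →
      (∫ s in a..(x - 2 * c * z), f s) - (∫ s in a..x, f s)
          + 2 * c * (f x + c * |f' x|) * z
        ≤ -(ε * c ^ 2 * z ^ 2) := by
  have hf'_le : ∀ t ∈ Icc a b, f' t ≤ -ε := fun t ht => by
    have := (hbounds t ht).1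
    rw [abs_of_neg (hf'neg t ht)] at this
    linarith
  refine ⟨1, one_pos, fun c hc _ x hx z hzA hzx => ?_⟩
  have hM0 : 0 < M := (abs_pos.2 (hf'neg x hx).ne).trans_le (hbounds x hx).2
  have hz : 2 * M ≤ ε * z := by linarith [mul_le_mul_of_nonneg_right hzA hε.le]
  have hz0 : 0 < z := pos_of_mul_pos_right (by linarith : 0 < ε * z) hε.le
  have hgain := integral_sub_integral_add_mul_le_of_hasDerivAt_le_neg (h := 2 * c * z)
    hderiv hf'_le hx.2 (by positivity) (by linarith)
  have hcorr : c * |f' x| * (2 * c * z) ≤ ε * c ^ 2 * z ^ 2 := by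
    calc c * |f' x| * (2 * c * z) ≤ c * M * (2 * c * z) := by
          gcongr; exact (hbounds x hx).2
      _ = c ^ 2 * z * (2 * M) := by ring
      _ ≤ c ^ 2 * z * (ε * z) := by gcongr
      _ = ε * c ^ 2 * z ^ 2 := by ring
  linarith

theorem stmt16 (a b ε M A : ℝ) (f f' : ℝ → ℝ) (hab : a < b)
    (hε : 0 < ε) (hM : ε ≤ M)
    (hderiv : ∀ t ∈ Icc a b, HasDerivAt f (f' t) t)
    (hf'cont : ContinuousOn f' (Icc a b))
    (hf'neg : ∀ t ∈ Icc a b, f' t < 0)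
    (hbounds : ∀ t ∈ Icc a b, ε ≤ |f' t| ∧ |f' t| ≤ M)
    (hA : 2 * M < A * ε) :
    ∃ c₀ > (0:ℝ), ∀ c : ℝ, 0 < c → c ≤ c₀ → ∀ x ∈ Icc a b, ∀ z : ℝ,
      A ≤ z → 2 * c * z ≤ x - a →
      (∫ s in a..(x - 2 * c * z), f s) - (∫ s in a..x, f s)
          + 2 * c * (f x + c * |f' x|) * z
        ≤ -(ε * c ^ 2 * z ^ 2) :=
  stmt16_general a b ε M A f f' hε hderiv hf'neg hbounds hA
end
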